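/- Let p be a prime and let K be a field with a valuation v : K → ℝ≥0 such that: v is nontrivial; the valuation ring O_v = {x : v x ≤ 1} is a henselian local ring; the residue field of O_v has characteristic p; the value group v(K^×) is non-discrete (for every γ ∈ v(K^×) with γ < 1 there is δ ∈ v(K^×) with γ < δ < 1); and the Frobenius map x ↦ x^p is surjective on O_v/(p). Then the completion K̂ of K, with its canonical extended valuation v̂ : K̂ → ℝ≥0, is a perfectoid field of residue characteristic p: K̂ is complete, v̂ is nontrivial with non-discrete value group, the residue field of O_{v̂} has characteristic p, and the Frobenius map is surjective on O_{v̂}/(p). -/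

import Mathlib

/-!
Density of `K` in `K̂` gives `v̂(K̂ˣ) = v(Kˣ)` and `v̂ n = v n` for `n : ℕ`, which transfers
nontriviality, non-discreteness and the residue characteristic. For the Frobenius there are two
cases. If `p ≠ 0` in `K`, every `x ∈ O_{v̂}` is congruent modulo `p` to an element of `O_v`, so
`O_v/(p) → O_{v̂}/(p)` is onto and semiperfectness passes along it. If `p = 0` in `K`, then
`O_v/(p) = O_v` is perfect, hence so is `K`; the inverse of Frobenius is then continuous
and extends to `K̂`, so `K̂` and with it `O_{v̂}` are perfect.
-/

set_option synthInstance.maxHeartbeats 1000000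
set_option maxHeartbeats 1000000

universe u

/-- A valuation `v : K → ℝ≥0` makes the field `K` a perfectoid field of residue
characteristic `p`: `v` is nontrivial, `K` is complete for the topology induced by `v`,
the value group `v(Kˣ)` is non-discrete, and the Frobenius `x ↦ x ^ p` is surjective on
`O_v/(p)`, where `p` is the characteristic of the residue field of `O_v`. -/
def IsPerfectoid (p : ℕ) (K : Type*) [Field K] (v : Valuation K NNReal) : Prop :=
  (∃ x : Kˣ, v (x : K) ≠ 1) ∧
  (letI : Valued K NNReal := Valued.mk' v; CompleteSpace K) ∧
  (∀ x : Kˣ, v (x : K) < 1 → ∃ y : Kˣ, v (x : K) < v (y : K) ∧ v (y : K) < 1) ∧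
  CharP (IsLocalRing.ResidueField v.valuationSubring) p ∧
  Function.Surjective
    (fun x : v.valuationSubring ⧸ Ideal.span {(p : v.valuationSubring)} => x ^ p)

open UniformSpace Topology

theorem surjective_pow_of_surjective_monoidHom {M N : Type*} [Monoid M] [Monoid N] {n : ℕ}
    {f : M →* N} (hf : Function.Surjective f) (h : Function.Surjective fun x : M => x ^ n) :
    Function.Surjective fun y : N => y ^ n := by
  intro y
  obtain ⟨x, rfl⟩ := hf y
  obtain ⟨z, rfl⟩ := h x
  exact ⟨f z, (map_pow f z n).symm⟩

namespace Ideal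

theorem surjective_pow_of_quotient_eq_bot {R : Type*} [CommRing R] {I : Ideal R}
    (hI : I = ⊥) {n : ℕ} (h : Function.Surjective fun x : R ⧸ I => x ^ n) :
    Function.Surjective fun x : R => x ^ n := by
  subst hI
  exact surjective_pow_of_surjective_monoidHom (f := (RingEquiv.quotientBot R).toMonoidHom)
    (RingEquiv.quotientBot R).surjective h

theorem surjective_pow_quotient_span_of_surjective_comp {A B : Type*} [CommRing A]
    [CommRing B] (f : A →+* B) (a : A) {n : ℕ}
    (hf : Function.Surjective ((Quotient.mk (span {f a})).comp f))
    (h : Function.Surjective fun x : A ⧸ span {a} => x ^ n) :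
    Function.Surjective fun x : B ⧸ span {f a} => x ^ n := by
  have hle : span {a} ≤ (span {f a}).comap f := by
    rw [span_singleton_le_iff_mem, mem_comap]
    exact mem_span_singleton_self _
  refine surjective_pow_of_surjective_monoidHom (f := (quotientMap _ f hle).toMonoidHom) ?_ h
  intro y
  obtain ⟨x, rfl⟩ := hf y
  exact ⟨Quotient.mk _ x, quotientMap_mk⟩

end Ideal

namespace Valuation

variable {F Γ₀ : Type*} [Field F] [LinearOrderedCommGroupWithZero Γ₀] {v : Valuation F Γ₀}

theorem natCast_eq_zero_in_residueField_iff (n : ℕ) :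
    (n : IsLocalRing.ResidueField v.valuationSubring) = 0 ↔ v n < 1 := by
  rw [← map_natCast (IsLocalRing.residue v.valuationSubring), IsLocalRing.residue_eq_zero_iff,
    IsLocalRing.mem_maximalIdeal, mem_nonunits_iff,
    (valuationSubring.integers v).isUnit_iff_valuation_eq_one]
  simpa using ((n : v.valuationSubring).2 : v n ≤ 1).lt_iff_ne.symm

theorem charP_residueField_valuationSubring_iff (p : ℕ) :
    CharP (IsLocalRing.ResidueField v.valuationSubring) p ↔ ∀ n : ℕ, v n < 1 ↔ p ∣ n := by
  simp only [← natCast_eq_zero_in_residueField_iff]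
  exact ⟨fun h => h.1, fun h => ⟨h⟩⟩

theorem surjective_pow_of_valuationSubring {n : ℕ}
    (h : Function.Surjective fun x : v.valuationSubring => x ^ n) :
    Function.Surjective fun x : F => x ^ n := by
  intro a
  rcases v.valuationSubring.mem_or_inv_mem a with ha | ha
  · obtain ⟨b, hb⟩ := h ⟨a, ha⟩
    exact ⟨b, congrArg Subtype.val hb⟩
  · obtain ⟨b, hb⟩ := h ⟨a⁻¹, ha⟩
    exact ⟨(b : F)⁻¹, by simpa [inv_pow, inv_eq_iff_eq_inv] using congrArg Subtype.val hb⟩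

theorem surjective_pow_valuationSubring {n : ℕ} (hn : n ≠ 0)
    (h : Function.Surjective fun x : F => x ^ n) :
    Function.Surjective fun x : v.valuationSubring => x ^ n := by
  intro a
  obtain ⟨b, hb : b ^ n = a⟩ := h a
  have hb1 : v b ≤ 1 := (pow_le_one_iff hn).1 (by rw [← map_pow, hb]; exact a.2)
  exact ⟨⟨b, hb1⟩, Subtype.ext hb⟩

end Valuation

namespace RingHom

variable {F E Γ₀ : Type*} [Field F] [Field E] [LinearOrderedCommGroupWithZero Γ₀]
  {v : Valuation F Γ₀} {w : Valuation E Γ₀}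

def valuationSubringMap (g : F →+* E) (hg : ∀ a, w (g a) = v a) :
    v.valuationSubring →+* w.valuationSubring :=
  g.restrict _ _ fun a ha => by simpa [Valuation.mem_valuationSubring_iff, hg] using ha

theorem surjective_quotient_comp_valuationSubringMap (g : F →+* E)
    (hg : ∀ a, w (g a) = v a) (r : v.valuationSubring)
    (hdense : ∀ x : E, ∃ a : F, w (x - g a) < v r) :
    Function.Surjective ((Ideal.Quotient.mk (Ideal.span {g.valuationSubringMap hg r})).comp
      (g.valuationSubringMap hg)) := by
  intro y
  obtain ⟨x, rfl⟩ := Ideal.Quotient.mk_surjective y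
  obtain ⟨a, ha⟩ := hdense x
  have hr : v r ≤ 1 := r.2
  have ha1 : v a ≤ 1 := by
    rw [← hg, ← sub_sub_cancel (x : E) (g a)]
    exact w.map_sub_le x.2 (ha.le.trans hr)
  refine ⟨⟨a, ha1⟩, Ideal.Quotient.eq.2 (Ideal.mem_span_singleton.2 ?_)⟩
  refine (Valuation.valuationSubring.integers w).dvd_of_le ?_
  change w (g a - x) ≤ w (g r)
  rw [Valuation.map_sub_swap, hg]
  exact ha.le

end RingHom

namespace Valued

variable {F Γ₀ : Type*} [Field F] [LinearOrderedCommGroupWithZero Γ₀] [Valued F Γ₀]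

theorem toUniformSpace_mk'_v (L : Type*) [Ring L] [Valued L Γ₀] :
    (Valued.mk' (Valued.v : Valuation L Γ₀)).toUniformSpace = ‹Valued L Γ₀›.toUniformSpace :=
  (toUniformSpace_eq L Γ₀).symm

theorem exists_units_extensionValuation_eq (x : (Completion F)ˣ) :
    ∃ a : Fˣ, extensionValuation (x : Completion F) = v (a : F) := by
  obtain ⟨a, ha⟩ := exists_coe_eq_v (x : Completion F)
  have ha0 : a ≠ 0 := by
    rintro rfl
    simp at ha
  exact ⟨Units.mk0 a ha0, ha⟩

theorem charP_residueField_completion {p : ℕ}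
    (h : CharP (IsLocalRing.ResidueField (v : Valuation F Γ₀).valuationSubring) p) :
    CharP (IsLocalRing.ResidueField
      (extensionValuation : Valuation (Completion F) Γ₀).valuationSubring) p := by
  rw [Valuation.charP_residueField_valuationSubring_iff] at h ⊢
  intro n
  have hn : ((n : F) : Completion F) = n := map_natCast (Completion.coeRingHom : F →+* _) n
  rw [← hn, extensionValuation_apply_coe, h]

theorem exists_coe_valuation_sub_lt (x : Completion F) {r : F} (hr : r ≠ 0) :
    ∃ a : F, Valued.v (x - a) < v r := by
  have hball : {y : Completion F | Valued.v (y - x) < v r} ∈ 𝓝 x := by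
    rw [mem_nhds]
    refine ⟨Units.mk0 (Valued.v.restrict (r : Completion F)) (by simpa using hr), fun y hy => ?_⟩
    simpa [Valuation.restrict_lt_iff] using hy
  obtain ⟨a, ha⟩ := Completion.denseRange_coe.mem_nhds hball
  exact ⟨a, by rwa [Valuation.map_sub_swap]⟩

theorem continuous_frobeniusEquiv_symm (p : ℕ) [ExpChar F p] [PerfectRing F p] :
    Continuous ((frobeniusEquiv F p).symm : F →+* F) := by
  refine continuous_of_tendsto_nhds_zero ((frobeniusEquiv F p).symm : F →+* F) ?_
  refine (hasBasis_nhds_zero F Γ₀).tendsto_iff (hasBasis_nhds_zero F Γ₀) |>.2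
    fun γ _ => ⟨γ ^ p, trivial, fun x hx => ?_⟩
  simp only [Set.mem_ofPred_eq, RingHom.coe_coe] at hx ⊢
  refine lt_of_pow_lt_pow_left' p ?_
  rw [← map_pow, ← frobenius_def, frobenius_apply_frobeniusEquiv_symm]
  exact hx

theorem surjective_pow_completion (p : ℕ) [ExpChar F p] [PerfectRing F p] :
    Function.Surjective fun x : Completion F => x ^ p := by
  let root := Completion.mapRingHom _ (continuous_frobeniusEquiv_symm (F := F) p)
  intro x
  refine ⟨root x, ?_⟩
  refine Completion.induction_on x
    (isClosed_eq (Completion.continuous_map.pow p) continuous_id) fun a => ?_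
  change root a ^ p = Completion.coeRingHom a
  rw [Completion.mapRingHom_coe]
  change Completion.coeRingHom _ ^ p = _
  rw [← map_pow, RingHom.coe_coe, ← frobenius_def, frobenius_apply_frobeniusEquiv_symm]

theorem surjective_pow_quotient_completion {p : ℕ} (hp : p.Prime)
    (hsp : Function.Surjective fun x : (v : Valuation F Γ₀).valuationSubring ⧸
      Ideal.span {(p : (v : Valuation F Γ₀).valuationSubring)} => x ^ p) :
    Function.Surjective fun x : (extensionValuation : Valuation (Completion F) Γ₀).valuationSubring ⧸
      Ideal.span {(p : (extensionValuation : Valuation (Completion F) Γ₀).valuationSubring)} =>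
      x ^ p := by
  by_cases hpF : (p : F) = 0
  · have : Fact p.Prime := ⟨hp⟩
    have : CharP F p := (CharP.charP_iff_prime_eq_zero hp).2 hpF
    have hpO : (p : (v : Valuation F Γ₀).valuationSubring) = 0 := Subtype.ext (by simp)
    have : PerfectRing F p := PerfectRing.ofSurjective F p <|
      Valuation.surjective_pow_of_valuationSubring
        (Ideal.surjective_pow_of_quotient_eq_bot (by rw [hpO, Ideal.span_singleton_eq_bot]) hsp)
    exact surjective_pow_of_surjective_monoidHom (f := (Ideal.Quotient.mk _).toMonoidHom)
      Ideal.Quotient.mk_surjective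
      (Valuation.surjective_pow_valuationSubring hp.ne_zero (surjective_pow_completion p))
  · let g : F →+* Completion F := Completion.coeRingHom
    have hg : ∀ a, extensionValuation (g a) = v a := extensionValuation_apply_coe
    rw [← map_natCast (g.valuationSubringMap hg) p]
    exact Ideal.surjective_pow_quotient_span_of_surjective_comp _ _
      (g.surjective_quotient_comp_valuationSubringMap hg _
        fun x => by exact_mod_cast exists_coe_valuation_sub_lt x hpF) hsp

end Valued

theorem completion_isPerfectoid_general (p : ℕ) (hp : p.Prime) {K : Type u} [Field K]
    (v : Valuation K NNReal)
    (hnt : ∃ x : Kˣ, v (x : K) ≠ 1)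
    (hres : CharP (IsLocalRing.ResidueField v.valuationSubring) p)
    (hnd : ∀ x : Kˣ, v (x : K) < 1 → ∃ y : Kˣ, v (x : K) < v (y : K) ∧ v (y : K) < 1)
    (hsp : Function.Surjective
      (fun x : v.valuationSubring ⧸ Ideal.span {(p : v.valuationSubring)} => x ^ p)) :
    letI : Valued K NNReal := Valued.mk' v
    IsPerfectoid p (UniformSpace.Completion K) Valued.extensionValuation := by
  let : Valued K NNReal := Valued.mk' v
  let coeUnits : Kˣ →* (Completion K)ˣ := Units.map (Completion.coeRingHom : K →+* _).toMonoidHom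
  have hcoe (x : Kˣ) : Valued.extensionValuation (coeUnits x : Completion K) = v x :=
    Valued.extensionValuation_apply_coe _
  refine ⟨?_, ?_, ?_, Valued.charP_residueField_completion hres,
    Valued.surjective_pow_quotient_completion hp hsp⟩
  · obtain ⟨x, hx⟩ := hnt
    exact ⟨coeUnits x, by rwa [hcoe]⟩
  · change @CompleteSpace _ (Valued.mk' Valued.v).toUniformSpace
    rw [Valued.toUniformSpace_mk'_v (Completion K)]
    infer_instance
  · intro x hx
    obtain ⟨a, ha⟩ := Valued.exists_units_extensionValuation_eq x
    obtain ⟨b, hab, hb⟩ := hnd a (ha ▸ hx)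
    exact ⟨coeUnits b, by rwa [hcoe, ha], by rwa [hcoe]⟩

/-- If `(K, v)` is a nontrivially valued henselian field of residue
characteristic `p` with non-discrete value group and `O_v/(p)` semiperfect, then the
completion of `K`, with the canonical extension of `v`, is a perfectoid field of residue
characteristic `p`. -/
theorem completion_isPerfectoid (p : ℕ) (hp : p.Prime) {K : Type u} [Field K]
    (v : Valuation K NNReal)
    (hnt : ∃ x : Kˣ, v (x : K) ≠ 1)
    (hhens : HenselianLocalRing v.valuationSubring)
    (hres : CharP (IsLocalRing.ResidueField v.valuationSubring) p)
    (hnd : ∀ x : Kˣ, v (x : K) < 1 → ∃ y : Kˣ, v (x : K) < v (y : K) ∧ v (y : K) < 1)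
    (hsp : Function.Surjective
      (fun x : v.valuationSubring ⧸ Ideal.span {(p : v.valuationSubring)} => x ^ p)) :
    letI : Valued K NNReal := Valued.mk' v
    IsPerfectoid p (UniformSpace.Completion K) Valued.extensionValuation :=
  completion_isPerfectoid_general p hp v hnt hres hnd hsp
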